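/- Let Q be a unital C*-algebra, n ≥ 1, v ∈ Mₙ(Q), and p ∈ GLₙ(ℂ). Let P ∈ Mₙ(Q) denote the image of p under the unital algebra embedding Mₙ(ℂ) → Mₙ(Q) (entrywise scalar multiplication of the unit), set w = P v P⁻¹, let s = pᵗ p̄ ∈ GLₙ(ℂ) and let S ∈ Mₙ(Q) denote its image. If wᵗ w̄ = Iₙ, then vᵗ S v̄ S⁻¹ = Iₙ. -/
import Mathlib


open scoped Matrix

section Helpers

variable {Q : Type*} [CStarAlgebra Q] {n : ℕ}

lemma map_star_mul_left' (c : Matrix (Fin n) (Fin n) ℂ) (A : Matrix (Fin n) (Fin n) Q) :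
    ((c.map (algebraMap ℂ Q)) * A).map star =
      (c.map (starRingEnd ℂ)).map (algebraMap ℂ Q) * A.map star := by
  ext i j
  simp only [Matrix.map_apply, Matrix.mul_apply, star_sum, star_mul]
  refine Finset.sum_congr rfl fun k _ => ?_
  rw [← algebraMap_star_comm, ← Algebra.commutes]
  rfl

lemma map_star_mul_right' (c : Matrix (Fin n) (Fin n) ℂ) (A : Matrix (Fin n) (Fin n) Q) :
    (A * (c.map (algebraMap ℂ Q))).map star =
      A.map star * (c.map (starRingEnd ℂ)).map (algebraMap ℂ Q) := by
  ext i j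
  simp only [Matrix.map_apply, Matrix.mul_apply, star_sum, star_mul]
  refine Finset.sum_congr rfl fun k _ => ?_
  rw [← algebraMap_star_comm, Algebra.commutes]
  rfl

lemma transpose_mul_left' (c : Matrix (Fin n) (Fin n) ℂ) (A : Matrix (Fin n) (Fin n) Q) :
    ((c.map (algebraMap ℂ Q)) * A)ᵀ = Aᵀ * (cᵀ.map (algebraMap ℂ Q)) := by
  ext i j
  simp only [Matrix.transpose_apply, Matrix.mul_apply, Matrix.map_apply]
  exact Finset.sum_congr rfl fun k _ => (Algebra.commutes _ _)

lemma transpose_mul_right' (c : Matrix (Fin n) (Fin n) ℂ) (A : Matrix (Fin n) (Fin n) Q) :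
    (A * (c.map (algebraMap ℂ Q)))ᵀ = (cᵀ.map (algebraMap ℂ Q)) * Aᵀ := by
  ext i j
  simp only [Matrix.transpose_apply, Matrix.mul_apply, Matrix.map_apply]
  exact Finset.sum_congr rfl fun k _ => (Algebra.commutes _ _).symm

end Helpers

/-- **Statement 4.** Let `Q` be a unital C*-algebra, `v ∈ Mₙ(Q)`, and `p ∈ GLₙ(ℂ)`.
Let `P` be the image of `p` under the entrywise embedding `Mₙ(ℂ) → Mₙ(Q)`, set
`w = P v P⁻¹`, let `s = pᵗ p̄` (with `p̄` the entrywise conjugate) and `S` its image in `Mₙ(Q)`.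
If `wᵗ w̄ = 1` (with `w̄` the entrywise star, no transpose), then `vᵗ S v̄ S⁻¹ = 1`. -/
theorem matrix_twisted_unitarity {Q : Type*} [CStarAlgebra Q] {n : ℕ} (hn : 1 ≤ n)
    (v : Matrix (Fin n) (Fin n) Q) (p : Matrix (Fin n) (Fin n) ℂ) (hp : IsUnit p.det)
    (hw :
      (p.map (algebraMap ℂ Q) * v * (p⁻¹).map (algebraMap ℂ Q))ᵀ *
        (p.map (algebraMap ℂ Q) * v * (p⁻¹).map (algebraMap ℂ Q)).map star = 1) :
    vᵀ * (pᵀ * p.map (starRingEnd ℂ)).map (algebraMap ℂ Q) * v.map star *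
      ((pᵀ * p.map (starRingEnd ℂ))⁻¹).map (algebraMap ℂ Q) = 1 := by
  have hpi : p * p⁻¹ = 1 := Matrix.mul_nonsing_inv p hp
  have hip : p⁻¹ * p = 1 := Matrix.nonsing_inv_mul p hp
  have hsinv : (pᵀ * p.map (starRingEnd ℂ))⁻¹ =
      (p⁻¹).map (starRingEnd ℂ) * (p⁻¹)ᵀ := by
    apply Matrix.inv_eq_right_inv
    calc pᵀ * p.map (starRingEnd ℂ) * ((p⁻¹).map (starRingEnd ℂ) * (p⁻¹)ᵀ)
        = pᵀ * ((p * p⁻¹).map (starRingEnd ℂ)) * (p⁻¹)ᵀ := by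
          rw [Matrix.map_mul]; simp only [mul_assoc]
      _ = (p⁻¹ * p)ᵀ := by
          rw [hpi, Matrix.map_one _ (map_zero _) (map_one _), mul_one,
            ← Matrix.transpose_mul]
      _ = 1 := by rw [hip, Matrix.transpose_one]
  set A := (pᵀ).map (algebraMap ℂ Q) with hA
  set A' := ((p⁻¹)ᵀ).map (algebraMap ℂ Q) with hA'
  set B := (p.map (starRingEnd ℂ)).map (algebraMap ℂ Q) with hB
  set B' := ((p⁻¹).map (starRingEnd ℂ)).map (algebraMap ℂ Q) with hB'
  rw [transpose_mul_right', transpose_mul_left', map_star_mul_right',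
      map_star_mul_left'] at hw
  have hAA' : A * A' = 1 := by
    rw [hA, hA', ← Matrix.map_mul, ← Matrix.transpose_mul, hip,
      Matrix.transpose_one, Matrix.map_one _ (map_zero _) (map_one _)]
  rw [hsinv, Matrix.map_mul, Matrix.map_mul, ← hA, ← hA', ← hB, ← hB']
  simp only [mul_assoc] at hw ⊢
  have key : vᵀ * (A * (B * (v.map star * B'))) = A := by
    calc vᵀ * (A * (B * (v.map star * B')))
        = A * A' * (vᵀ * (A * (B * (v.map star * B')))) := by rw [hAA', one_mul]
      _ = A * (A' * (vᵀ * (A * (B * (v.map star * B'))))) := by rw [mul_assoc]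
      _ = A := by rw [hw, mul_one]
  calc vᵀ * (A * (B * (v.map star * (B' * A'))))
      = (vᵀ * (A * (B * (v.map star * B')))) * A' := by simp only [mul_assoc]
    _ = A * A' := by rw [key]
    _ = 1 := hAA'
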